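/- arXiv:2412.18279 — 5 statements merged into one kernel-verified Lean document; each statement's English description precedes it below -/
import Mathlib

section
/- Let A be a finite type, d a natural number, β > 0 a real, π_ref : A → ℝ with π_ref(a) > 0 for all a, and Adv : A → ℝ. Let π : ℝ^d → A → ℝ be such that π(θ, a) > 0 for all θ and a, ∑_a π(θ, a) = 1 for every θ, and θ ↦ π(θ, a) is differentiable at a point θ₀ for every a. Define I(θ) = ∑_a π(θ, a)·(Adv(a) − β·log(π(θ, a)/π_ref(a))) and H(θ) = (1/2)·∑_a π(θ₀, a)·(Adv(a)/β − log(π(θ, a)/π_ref(a)))². Then the gradient of I at θ₀ equals −β times the gradient of H at θ₀. -/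
/-!
Write `D a` for the derivative of `θ ↦ π θ a` at `θ₀` and `ℓ a = log (π θ₀ a / πref a)`.
Since `d log π = D / π`, the product rule gives `dI = ∑ (Adv a - β ℓ a - β) • D a`, and the
frozen weights `π θ₀ a` in `H` cancel the `1 / π` to give `dH = -∑ (Adv a / β - ℓ a) • D a`.
Differentiating `∑ a, π θ a = 1` gives `∑ D a = 0`, which removes the extra `-β` from `dI`.
-/

open Finset

section

variable {E : Type*} [NormedAddCommGroup E] [NormedSpace ℝ E] {A : Type*} [Fintype A]

noncomputable def klImprovementObjective (β : ℝ) (πref Adv : A → ℝ) (π : E → A → ℝ) (θ : E) :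
    ℝ :=
  ∑ a, π θ a * (Adv a - β * Real.log (π θ a / πref a))

noncomputable def squaredErrorSurrogate (β : ℝ) (πref Adv : A → ℝ) (π : E → A → ℝ) (θ₀ θ : E) :
    ℝ :=
  (1 / 2) * ∑ a, π θ₀ a * (Adv a / β - Real.log (π θ a / πref a)) ^ 2

theorem sum_fderiv_eq_zero_of_sum_eq_const {p : E → A → ℝ} {c : ℝ} {x : E}
    (hsum : ∀ θ, ∑ a, p θ a = c) (hp : ∀ a, DifferentiableAt ℝ (fun θ => p θ a) x) :
    ∑ a, fderiv ℝ (fun θ => p θ a) x = 0 := by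
  rw [← fderiv_fun_sum fun a _ => hp a]
  simp only [hsum, fderiv_const_apply]

theorem HasFDerivAt.log_div_const {f : E → ℝ} {f' : E →L[ℝ] ℝ} {x : E} {c : ℝ}
    (hf : HasFDerivAt f f' x) (hx : f x ≠ 0) (hc : c ≠ 0) :
    HasFDerivAt (fun θ => Real.log (f θ / c)) ((f x)⁻¹ • f') x := by
  have h := (hf.mul_const c⁻¹).log (mul_ne_zero hx (inv_ne_zero hc))
  simp only [← div_eq_mul_inv, smul_smul] at h
  convert h using 2
  field_simp

theorem HasFDerivAt.mul_sub_const_mul_log_div {p : E → ℝ} {p' : E →L[ℝ] ℝ} {x : E}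
    (hp : HasFDerivAt p p' x) (hx : p x ≠ 0) {c : ℝ} (hc : c ≠ 0) (b β : ℝ) :
    HasFDerivAt (fun θ => p θ * (b - β * Real.log (p θ / c)))
      ((b - β * Real.log (p x / c) - β) • p') x := by
  refine (hp.fun_mul (((hp.log_div_const hx hc).const_mul β).const_sub b)).congr_fderiv ?_
  rw [smul_smul β, smul_neg, smul_smul, mul_left_comm, mul_inv_cancel₀ hx, mul_one]
  module

theorem HasFDerivAt.const_mul_sub_log_div_sq {p : E → ℝ} {p' : E →L[ℝ] ℝ} {x : E}
    (hp : HasFDerivAt p p' x) (hx : p x ≠ 0) {c : ℝ} (hc : c ≠ 0) (b : ℝ) :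
    HasFDerivAt (fun θ => p x * (b - Real.log (p θ / c)) ^ 2)
      ((-2 * (b - Real.log (p x / c))) • p') x := by
  refine ((((hp.log_div_const hx hc).const_sub b).pow 2).const_mul (p x)).congr_fderiv ?_
  rw [smul_neg, smul_smul, smul_neg, smul_smul, ← neg_smul]
  congr 1
  field_simp
  ring

variable {β : ℝ} {πref Adv : A → ℝ} {π : E → A → ℝ} {θ₀ : E}

theorem hasFDerivAt_klImprovementObjective (hπref : ∀ a, πref a ≠ 0)
    (hπ : ∀ a, π θ₀ a ≠ 0) (hdiff : ∀ a, DifferentiableAt ℝ (fun θ => π θ a) θ₀) :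
    HasFDerivAt (klImprovementObjective β πref Adv π)
      (∑ a, (Adv a - β * Real.log (π θ₀ a / πref a) - β) •
        fderiv ℝ (fun θ => π θ a) θ₀) θ₀ := by
  unfold klImprovementObjective
  exact HasFDerivAt.fun_sum fun a _ =>
    (hdiff a).hasFDerivAt.mul_sub_const_mul_log_div (hπ a) (hπref a) (Adv a) β

theorem hasFDerivAt_squaredErrorSurrogate (hπref : ∀ a, πref a ≠ 0)
    (hπ : ∀ a, π θ₀ a ≠ 0) (hdiff : ∀ a, DifferentiableAt ℝ (fun θ => π θ a) θ₀) :
    HasFDerivAt (squaredErrorSurrogate β πref Adv π θ₀)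
      (-∑ a, (Adv a / β - Real.log (π θ₀ a / πref a)) •
        fderiv ℝ (fun θ => π θ a) θ₀) θ₀ := by
  unfold squaredErrorSurrogate
  refine ((HasFDerivAt.fun_sum fun a _ => (hdiff a).hasFDerivAt.const_mul_sub_log_div_sq
    (hπ a) (hπref a) (Adv a / β)).const_mul (1 / 2)).congr_fderiv ?_
  rw [smul_sum, ← sum_neg_distrib]
  exact sum_congr rfl fun a _ => by module

theorem fderiv_klImprovementObjective_eq_neg_smul (hβ : β ≠ 0) (hπref : ∀ a, πref a ≠ 0)
    (hπ : ∀ a, π θ₀ a ≠ 0) (hπsum : ∀ θ, ∑ a, π θ a = 1)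
    (hdiff : ∀ a, DifferentiableAt ℝ (fun θ => π θ a) θ₀) :
    fderiv ℝ (klImprovementObjective β πref Adv π) θ₀ =
      (-β) • fderiv ℝ (squaredErrorSurrogate β πref Adv π θ₀) θ₀ := by
  rw [(hasFDerivAt_klImprovementObjective hπref hπ hdiff).fderiv,
    (hasFDerivAt_squaredErrorSurrogate hπref hπ hdiff).fderiv]
  have hD := sum_fderiv_eq_zero_of_sum_eq_const hπsum hdiff
  simp only [sub_smul _ β, sum_sub_distrib, ← smul_sum, hD, smul_zero, sub_zero]
  rw [neg_smul, smul_neg, neg_neg, smul_sum]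
  refine sum_congr rfl fun a _ => ?_
  rw [smul_smul, mul_sub, mul_div_cancel₀ _ hβ]

end

/-- **Lemma 1 (equivalent update).** The gradient of the one-step KL-regularized
policy improvement objective `I` equals `−β` times the gradient of the squared-error
surrogate `H` in which the expectation is taken under the frozen policy `π θ₀`. -/
theorem dapo_equivalent_update {A : Type*} [Fintype A] (d : ℕ) (β : ℝ) (hβ : 0 < β)
    (πref : A → ℝ) (hπref : ∀ a, 0 < πref a) (Adv : A → ℝ)
    (π : EuclideanSpace ℝ (Fin d) → A → ℝ)
    (hπpos : ∀ θ a, 0 < π θ a)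
    (hπsum : ∀ θ, ∑ a, π θ a = 1)
    (θ₀ : EuclideanSpace ℝ (Fin d))
    (hdiff : ∀ a, DifferentiableAt ℝ (fun θ => π θ a) θ₀) :
    gradient (fun θ => ∑ a, π θ a * (Adv a - β * Real.log (π θ a / πref a))) θ₀ =
      (-β) • gradient
        (fun θ => (1 / 2) * ∑ a, π θ₀ a * (Adv a / β - Real.log (π θ a / πref a)) ^ 2) θ₀ := by
  change gradient (klImprovementObjective β πref Adv π) θ₀ =
    (-β) • gradient (squaredErrorSurrogate β πref Adv π θ₀) θ₀
  rw [gradient, gradient, fderiv_klImprovementObjective_eq_neg_smul hβ.ne'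
    (fun a => (hπref a).ne') (fun a => (hπpos θ₀ a).ne') hπsum hdiff, map_smul]
end

section
/- Let A be a finite type, β > 0 a real, and let ν, π_ref : A → ℝ be probability mass functions with ν(a) > 0 and π_ref(a) > 0 for all a. Let Adv : A → ℝ satisfy ∑_a π_ref(a)·Adv(a) = 0. Suppose π⁺ : A → ℝ minimizes L(π) = (1/2)·∑_a ν(a)·(Adv(a)/β − log(π(a)/π_ref(a)))² over all probability mass functions π with π(a) > 0 for all a. Then the one-step improvement I(π⁺) = ∑_a π⁺(a)·(Adv(a) − β·log(π⁺(a)/π_ref(a))) satisfies I(π⁺) ≥ 0, and I(π⁺) = 0 if and only if Adv(a) = 0 for all a. -/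
/-!
Tilting the minimizer exponentially along a direction `h` keeps it a positive probability vector,
so stationarity of the loss along the tilt gives, for the residual `r = Adv / β - log (π⁺ / πref)`
and `S = ∑ ν r`, the first-order condition `ν a * r a = S * π⁺ a`. Hence the improvement equals
`β * S * ∑ π⁺² / ν`, and every `r a` has the sign of `S`. Since `π⁺ = πref * exp (Adv / β - r)`
sums to `1` while `∑ πref * exp (Adv / β) ≥ 1` by `exp x ≥ 1 + x` and the mean-zero condition,
`S < 0` is impossible, and `S = 0` forces equality in `exp x ≥ 1 + x`, i.e. `Adv = 0`. Conversely,
if `Adv = 0` then `πref` has zero loss, so the minimizer does too and `r = 0`.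
-/

open Finset

lemma Fintype.nonempty_of_sum_eq_one {A M : Type*} [Fintype A] [AddCommMonoidWithOne M]
    [NeZero (1 : M)] {p : A → M} (h : ∑ a, p a = 1) : Nonempty A :=
  univ_nonempty_iff.mp (nonempty_of_sum_ne_zero (h ▸ one_ne_zero))

section Tilt

open Real

variable {A : Type*} [Fintype A] (p h : A → ℝ)

noncomputable def partitionFn (t : ℝ) : ℝ := ∑ a, p a * exp (t * h a)

noncomputable def tilt (t : ℝ) (a : A) : ℝ := p a * exp (t * h a) / partitionFn p h t

variable {p}

lemma partitionFn_zero (hp : ∑ a, p a = 1) : partitionFn p h 0 = 1 := by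
  simp [partitionFn, hp]

lemma partitionFn_pos [Nonempty A] (hp : ∀ a, 0 < p a) (t : ℝ) : 0 < partitionFn p h t :=
  sum_pos (fun a _ => mul_pos (hp a) (exp_pos _)) univ_nonempty

lemma hasDerivAt_partitionFn (t : ℝ) :
    HasDerivAt (partitionFn p h) (∑ a, p a * (h a * exp (t * h a))) t := by
  unfold partitionFn
  refine HasDerivAt.fun_sum fun a _ => ?_
  refine ((((hasDerivAt_id t).mul_const (h a)).exp).const_mul (p a)).congr_deriv ?_
  simp only [id]
  ring

lemma hasDerivAt_log_partitionFn_zero (hp : ∑ a, p a = 1) :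
    HasDerivAt (fun t => log (partitionFn p h t)) (∑ a, p a * h a) 0 := by
  have hZ := partitionFn_zero h hp
  have := (hasDerivAt_partitionFn h 0).log (hZ ▸ one_ne_zero)
  simpa only [hZ, div_one, zero_mul, exp_zero, mul_one] using this

lemma tilt_zero (hp : ∑ a, p a = 1) : tilt p h 0 = p := by
  ext a
  simp [tilt, partitionFn_zero h hp]

lemma tilt_pos [Nonempty A] (hp : ∀ a, 0 < p a) (t : ℝ) (a : A) : 0 < tilt p h t a :=
  div_pos (mul_pos (hp a) (exp_pos _)) (partitionFn_pos h hp t)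

lemma sum_tilt [Nonempty A] (hp : ∀ a, 0 < p a) (t : ℝ) : ∑ a, tilt p h t a = 1 := by
  simp only [tilt, ← sum_div]
  exact div_self (partitionFn_pos h hp t).ne'

lemma log_tilt_div (hp : ∀ a, 0 < p a) {q : A → ℝ} {a : A} (hq : q a ≠ 0) (t : ℝ) :
    log (tilt p h t a / q a) = log (p a / q a) + t * h a - log (partitionFn p h t) := by
  have : Nonempty A := ⟨a⟩
  rw [show tilt p h t a / q a = p a / q a * exp (t * h a) / partitionFn p h t by
      simp only [tilt]; ring,
    log_div (mul_ne_zero (div_ne_zero (hp a).ne' hq) (exp_pos _).ne')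
      (partitionFn_pos h hp t).ne',
    log_mul (div_ne_zero (hp a).ne' hq) (exp_pos _).ne', log_exp]

end Tilt

section Loss

open Real

variable {A : Type*} (ν q c : A → ℝ)

noncomputable def dapoResidual (ρ : A → ℝ) (a : A) : ℝ := c a - log (ρ a / q a)

lemma mul_exp_sub_dapoResidual {q c ρ : A → ℝ} {a : A} (hρ : 0 < ρ a) (hq : 0 < q a) :
    q a * exp (c a - dapoResidual q c ρ a) = ρ a := by
  rw [dapoResidual, sub_sub_cancel, exp_log (div_pos hρ hq), mul_div_cancel₀ _ hq.ne']

variable [Fintype A]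

noncomputable def dapoLoss (ρ : A → ℝ) : ℝ := (1 / 2) * ∑ a, ν a * dapoResidual q c ρ a ^ 2

variable {ν q c}

lemma sum_mul_sub_mul_log_div_eq {β : ℝ} (hβ : β ≠ 0) (Adv ρ : A → ℝ) :
    ∑ a, ρ a * (Adv a - β * log (ρ a / q a)) =
      β * ∑ a, ρ a * dapoResidual q (fun a => Adv a / β) ρ a := by
  rw [mul_sum]
  refine sum_congr rfl fun a _ => ?_
  simp only [dapoResidual]
  field_simp

lemma dapoResidual_eq_zero_of_dapoLoss_nonpos {ρ : A → ℝ} (hν : ∀ a, 0 < ν a)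
    (h : dapoLoss ν q c ρ ≤ 0) (a : A) : dapoResidual q c ρ a = 0 := by
  have hterm : ∀ b ∈ univ, 0 ≤ ν b * dapoResidual q c ρ b ^ 2 :=
    fun b _ => mul_nonneg (hν b).le (sq_nonneg _)
  have hsum : ∑ b, ν b * dapoResidual q c ρ b ^ 2 = 0 :=
    le_antisymm (by unfold dapoLoss at h; linarith) (sum_nonneg hterm)
  have := (sum_eq_zero_iff_of_nonneg hterm).mp hsum a (mem_univ a)
  simpa [(hν a).ne'] using this

lemma dapoLoss_tilt {p : A → ℝ} (hp : ∀ a, 0 < p a) (hq : ∀ a, q a ≠ 0) (h : A → ℝ) (t : ℝ) :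
    dapoLoss ν q c (tilt p h t) =
      (1 / 2) * ∑ a, ν a * (dapoResidual q c p a - t * h a + log (partitionFn p h t)) ^ 2 := by
  simp only [dapoLoss, dapoResidual, log_tilt_div h hp (hq _)]
  congr 1
  refine sum_congr rfl fun a _ => ?_
  ring

lemma hasDerivAt_dapoLoss_tilt {p : A → ℝ} (hp : ∀ a, 0 < p a) (hpsum : ∑ a, p a = 1)
    (hq : ∀ a, q a ≠ 0) (h : A → ℝ) :
    HasDerivAt (fun t => dapoLoss ν q c (tilt p h t))
      ((∑ a, ν a * dapoResidual q c p a) * (∑ a, p a * h a) -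
        ∑ a, ν a * dapoResidual q c p a * h a) 0 := by
  simp only [dapoLoss_tilt hp hq]
  have hlogZ := hasDerivAt_log_partitionFn_zero h hpsum
  have hterm : ∀ a, HasDerivAt
      (fun t => ν a * (dapoResidual q c p a - t * h a + log (partitionFn p h t)) ^ 2)
      (2 * (ν a * dapoResidual q c p a * ∑ b, p b * h b - ν a * dapoResidual q c p a * h a)) 0 := by
    intro a
    refine ((((hasDerivAt_mul_const (h a)).const_sub _).add hlogZ).pow 2
      |>.const_mul (ν a)).congr_deriv ?_
    simp only [Pi.add_apply, zero_mul, sub_zero, partitionFn_zero h hpsum, log_one, add_zero]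
    ring
  refine ((HasDerivAt.fun_sum fun a _ => hterm a).const_mul (1 / 2 : ℝ)).congr_deriv ?_
  rw [← mul_sum, sum_sub_distrib, ← sum_mul]
  ring

end Loss

section Stationarity

variable {A : Type*} [Fintype A] {ν q c p : A → ℝ}

theorem sum_mul_dapoResidual_mul_eq_of_isMin (hp : ∀ a, 0 < p a) (hpsum : ∑ a, p a = 1)
    (hq : ∀ a, q a ≠ 0)
    (hmin : ∀ ρ : A → ℝ, (∀ a, 0 < ρ a) → ∑ a, ρ a = 1 → dapoLoss ν q c p ≤ dapoLoss ν q c ρ)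
    (h : A → ℝ) :
    ∑ a, ν a * dapoResidual q c p a * h a =
      (∑ a, ν a * dapoResidual q c p a) * ∑ a, p a * h a := by
  have : Nonempty A := Fintype.nonempty_of_sum_eq_one hpsum
  have hlocal : IsLocalMin (fun t => dapoLoss ν q c (tilt p h t)) 0 :=
    Filter.Eventually.of_forall fun t => by
      simpa only [tilt_zero h hpsum] using hmin _ (tilt_pos h hp t) (sum_tilt h hp t)
  linarith [hlocal.hasDerivAt_eq_zero (hasDerivAt_dapoLoss_tilt hp hpsum hq h)]

theorem dapoResidual_eq_of_isMin (hν : ∀ a, 0 < ν a) (hp : ∀ a, 0 < p a) (hpsum : ∑ a, p a = 1)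
    (hq : ∀ a, q a ≠ 0)
    (hmin : ∀ ρ : A → ℝ, (∀ a, 0 < ρ a) → ∑ a, ρ a = 1 → dapoLoss ν q c p ≤ dapoLoss ν q c ρ)
    (a : A) :
    dapoResidual q c p a = (∑ b, ν b * dapoResidual q c p b) * (p a / ν a) := by
  classical
  have := sum_mul_dapoResidual_mul_eq_of_isMin hp hpsum hq hmin (Pi.single a 1)
  simp only [Pi.single_apply, mul_ite, mul_one, mul_zero, sum_ite_eq', mem_univ, if_true] at this
  field_simp [(hν a).ne']
  linarith

theorem dapoResidual_eq_zero_of_isMin (hν : ∀ a, 0 < ν a) (hq : ∀ a, 0 < q a)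
    (hqsum : ∑ a, q a = 1) (hc : ∀ a, c a = 0)
    (hmin : ∀ ρ : A → ℝ, (∀ a, 0 < ρ a) → ∑ a, ρ a = 1 → dapoLoss ν q c p ≤ dapoLoss ν q c ρ)
    (a : A) : dapoResidual q c p a = 0 := by
  refine dapoResidual_eq_zero_of_dapoLoss_nonpos hν ((hmin q hq hqsum).trans_eq ?_) a
  simp [dapoLoss, dapoResidual, hc, fun b => (hq b).ne']

end Stationarity

section Gibbs

open Real

variable {A : Type*} [Fintype A] {q c : A → ℝ}

lemma one_le_sum_mul_exp (hq : ∀ a, 0 ≤ q a) (hqsum : ∑ a, q a = 1)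
    (hmean : ∑ a, q a * c a = 0) : 1 ≤ ∑ a, q a * exp (c a) :=
  calc 1 = ∑ a, q a * (c a + 1) := by simp [mul_add, sum_add_distrib, hmean, hqsum]
    _ ≤ ∑ a, q a * exp (c a) :=
      sum_le_sum fun a _ => mul_le_mul_of_nonneg_left (add_one_le_exp _) (hq a)

lemma eq_zero_of_sum_mul_exp_eq_one (hq : ∀ a, 0 < q a) (hqsum : ∑ a, q a = 1)
    (hmean : ∑ a, q a * c a = 0) (h : ∑ a, q a * exp (c a) = 1) (a : A) : c a = 0 := by
  have hterm : ∀ b ∈ univ, 0 ≤ q b * (exp (c b) - (c b + 1)) :=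
    fun b _ => mul_nonneg (hq b).le (sub_nonneg.mpr (add_one_le_exp _))
  have hsum : ∑ b, q b * (exp (c b) - (c b + 1)) = 0 := by
    simp [mul_sub, mul_add, sum_sub_distrib, sum_add_distrib, h, hmean, hqsum]
  have := (sum_eq_zero_iff_of_nonneg hterm).mp hsum a (mem_univ a)
  by_contra hca
  linarith [add_one_lt_exp hca, (mul_eq_zero.mp this).resolve_left (hq a).ne']

variable {p : A → ℝ}

lemma exists_dapoResidual_nonneg (hp : ∀ a, 0 < p a) (hpsum : ∑ a, p a = 1)
    (hq : ∀ a, 0 < q a) (hqsum : ∑ a, q a = 1) (hmean : ∑ a, q a * c a = 0) :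
    ∃ a, 0 ≤ dapoResidual q c p a := by
  by_contra! hneg
  have : Nonempty A := Fintype.nonempty_of_sum_eq_one hpsum
  have hlt : ∑ a, q a * exp (c a) < ∑ a, p a :=
    sum_lt_sum_of_nonempty univ_nonempty fun a _ => by
      rw [← mul_exp_sub_dapoResidual (hp a) (hq a)]
      gcongr
      · exact hq a
      · linarith [hneg a]
  linarith [one_le_sum_mul_exp (fun a => (hq a).le) hqsum hmean]

lemma eq_zero_of_dapoResidual_eq_zero (hp : ∀ a, 0 < p a) (hpsum : ∑ a, p a = 1)
    (hq : ∀ a, 0 < q a) (hqsum : ∑ a, q a = 1) (hmean : ∑ a, q a * c a = 0)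
    (hr : ∀ a, dapoResidual q c p a = 0) (a : A) : c a = 0 := by
  refine eq_zero_of_sum_mul_exp_eq_one hq hqsum hmean ?_ a
  calc ∑ a, q a * exp (c a) = ∑ a, q a * exp (c a - dapoResidual q c p a) := by simp [hr]
    _ = 1 := by simp only [mul_exp_sub_dapoResidual (hp _) (hq _), hpsum]

end Gibbs

theorem dapo_single_state_improvement_general {A : Type*} [Fintype A] (β : ℝ) (hβ : 0 < β)
    (ν πref : A → ℝ)
    (hνpos : ∀ a, 0 < ν a)
    (hrefpos : ∀ a, 0 < πref a) (hrefsum : ∑ a, πref a = 1)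
    (Adv : A → ℝ) (hmean : ∑ a, πref a * Adv a = 0)
    (πplus : A → ℝ) (hpluspos : ∀ a, 0 < πplus a) (hplussum : ∑ a, πplus a = 1)
    (hmin : ∀ π : A → ℝ, (∀ a, 0 < π a) → ∑ a, π a = 1 →
      (1 / 2) * ∑ a, ν a * (Adv a / β - Real.log (πplus a / πref a)) ^ 2 ≤
        (1 / 2) * ∑ a, ν a * (Adv a / β - Real.log (π a / πref a)) ^ 2) :
    0 ≤ ∑ a, πplus a * (Adv a - β * Real.log (πplus a / πref a)) ∧
      ((∑ a, πplus a * (Adv a - β * Real.log (πplus a / πref a))) = 0 ↔ ∀ a, Adv a = 0) := by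
  set c : A → ℝ := fun a => Adv a / β
  have hcmean : ∑ a, πref a * c a = 0 := by
    simp only [c, mul_div_assoc', ← sum_div, hmean, zero_div]
  have hq : ∀ a, πref a ≠ 0 := fun a => (hrefpos a).ne'
  set S := ∑ a, ν a * dapoResidual πref c πplus a
  have hr : ∀ a, dapoResidual πref c πplus a = S * (πplus a / ν a) :=
    dapoResidual_eq_of_isMin hνpos hpluspos hplussum hq hmin
  have hI : ∑ a, πplus a * (Adv a - β * Real.log (πplus a / πref a)) =
      β * S * ∑ a, πplus a ^ 2 / ν a := by
    rw [sum_mul_sub_mul_log_div_eq hβ.ne', mul_assoc, mul_sum univ _ S]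
    congr 1
    exact sum_congr rfl fun a _ => by rw [hr]; ring
  have hS : 0 ≤ S := by
    obtain ⟨a, ha⟩ := exists_dapoResidual_nonneg hpluspos hplussum hrefpos hrefsum hcmean
    rw [hr] at ha
    exact nonneg_of_mul_nonneg_left ha (div_pos (hpluspos a) (hνpos a))
  have hS0 : S = 0 ↔ ∀ a, Adv a = 0 := by
    constructor
    · intro h a
      have := eq_zero_of_dapoResidual_eq_zero hpluspos hplussum hrefpos hrefsum hcmean
        (fun b => by rw [hr, h, zero_mul]) a
      simpa [c, hβ.ne'] using this
    · intro h
      have hc : ∀ a, c a = 0 := fun a => by simp [c, h]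
      simp [S, dapoResidual_eq_zero_of_isMin hνpos hrefpos hrefsum hc hmin]
  have : Nonempty A := Fintype.nonempty_of_sum_eq_one hplussum
  have hT : 0 < ∑ a, πplus a ^ 2 / ν a :=
    sum_pos (fun a _ => div_pos (pow_pos (hpluspos a) 2) (hνpos a)) univ_nonempty
  rw [hI]
  exact ⟨by positivity, by simp [hβ.ne', hT.ne', hS0]⟩

/-- Single-state core of Theorem 1 (monotonic improvement): the minimizer of the exact
DAPO squared-error objective under an exploratory sampling distribution `ν` has
nonnegative KL-regularized one-step improvement over `πref`, and the improvement is
zero iff the advantage vanishes identically. -/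
theorem dapo_single_state_improvement {A : Type*} [Fintype A] (β : ℝ) (hβ : 0 < β)
    (ν πref : A → ℝ)
    (hνpos : ∀ a, 0 < ν a) (hνsum : ∑ a, ν a = 1)
    (hrefpos : ∀ a, 0 < πref a) (hrefsum : ∑ a, πref a = 1)
    (Adv : A → ℝ) (hmean : ∑ a, πref a * Adv a = 0)
    (πplus : A → ℝ) (hpluspos : ∀ a, 0 < πplus a) (hplussum : ∑ a, πplus a = 1)
    (hmin : ∀ π : A → ℝ, (∀ a, 0 < π a) → ∑ a, π a = 1 →
      (1 / 2) * ∑ a, ν a * (Adv a / β - Real.log (πplus a / πref a)) ^ 2 ≤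
        (1 / 2) * ∑ a, ν a * (Adv a / β - Real.log (π a / πref a)) ^ 2) :
    0 ≤ ∑ a, πplus a * (Adv a - β * Real.log (πplus a / πref a)) ∧
      ((∑ a, πplus a * (Adv a - β * Real.log (πplus a / πref a))) = 0 ↔ ∀ a, Adv a = 0) :=
  dapo_single_state_improvement_general β hβ ν πref hνpos hrefpos hrefsum Adv hmean πplus hpluspos
    hplussum hmin
end

section
/- Let A be a finite type, β > 0 a real, and π_ref : A → ℝ a probability mass function with π_ref(a) > 0 for all a. Let Adv : A → ℝ satisfy ∑_a π_ref(a)·Adv(a) = 0. Suppose π⁺ : A → ℝ minimizes L(π) = (1/2)·∑_a π_ref(a)·(Adv(a)/β − log(π(a)/π_ref(a)))² over all probability mass functions π with π(a) > 0 for all a. Then ∑_a π⁺(a)·(Adv(a) − β·log(π⁺(a)/π_ref(a))) ≥ β·∑_a π_ref(a)·log(π_ref(a)/π⁺(a)), i.e., the one-step improvement of π⁺ over π_ref is bounded below by β times the Kullback–Leibler divergence KL(π_ref ‖ π⁺). -/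
/-!
Put `g = Adv / β - log (π⁺ / π_ref)`. Because `Adv` has `π_ref`-mean zero, the `π_ref`-mean of `g`
is `KL(π_ref ‖ π⁺) ≥ 0`, while the right-hand side is `β` times the `π⁺`-mean of `g`. Along the
exponential tilts `π_t ∝ π⁺ e^{t g}` the residual `Adv / β - log (π_t / π_ref)` equals
`(1 - t) g + log Z(t)`, so stationarity of the loss at `t = 0` gives
`E_ref[g²] = E_ref[g] · E₊[g]`. Cauchy–Schwarz, `E_ref[g]² ≤ E_ref[g²]`, then yields
`E_ref[g] ≤ E₊[g]`.
-/

open Finset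

section

open Real

variable {A : Type*} [Fintype A]

theorem sum_mul_log_div_nonneg {p q : A → ℝ} (hp : ∀ a, 0 < p a) (hq : ∀ a, 0 < q a)
    (hpq : ∑ a, q a ≤ ∑ a, p a) : 0 ≤ ∑ a, p a * log (p a / q a) := by
  have hpoint (a : A) : p a - q a ≤ p a * log (p a / q a) := by
    have := mul_le_mul_of_nonneg_left (one_sub_inv_le_log_of_pos (div_pos (hp a) (hq a)))
      (hp a).le
    rwa [inv_div, mul_sub, mul_one, mul_div_cancel₀ _ (hp a).ne'] at this
  calc 0 ≤ ∑ a, (p a - q a) := by rw [sum_sub_distrib]; linarith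
    _ ≤ ∑ a, p a * log (p a / q a) := sum_le_sum fun a _ => hpoint a

theorem sq_sum_mul_le_sum_mul_sq {w : A → ℝ} (hw : ∀ a, 0 ≤ w a) (hw1 : ∑ a, w a = 1)
    (g : A → ℝ) : (∑ a, w a * g a) ^ 2 ≤ ∑ a, w a * g a ^ 2 := by
  have hsq (a : A) : (w a * g a) ^ 2 = w a * (w a * g a ^ 2) := by ring
  simpa [hw1] using sum_sq_le_sum_mul_sum_of_sq_le_mul univ (fun a _ => hw a)
    (fun a _ => mul_nonneg (hw a) (sq_nonneg (g a))) (fun a _ => (hsq a).le)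

theorem sum_mul_le_sum_mul_of_sum_mul_sq_eq {w : A → ℝ} (hw : ∀ a, 0 < w a)
    (hw1 : ∑ a, w a = 1) (p g : A → ℝ) (hc : 0 ≤ ∑ a, w a * g a)
    (hS : ∑ a, w a * g a ^ 2 = (∑ a, w a * g a) * ∑ a, p a * g a) :
    ∑ a, w a * g a ≤ ∑ a, p a * g a := by
  have hCS := sq_sum_mul_le_sum_mul_sq (fun a => (hw a).le) hw1 g
  rcases hc.eq_or_lt with hc0 | hcpos
  · have hS0 : ∑ a, w a * g a ^ 2 = 0 := by rw [hS, ← hc0, zero_mul]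
    have hg (a : A) : g a = 0 := by
      have := (sum_eq_zero_iff_of_nonneg fun b _ => mul_nonneg (hw b).le (sq_nonneg (g b))).mp
        hS0 a (mem_univ a)
      simpa [(hw a).ne'] using this
    simp [hg]
  · exact le_of_mul_le_mul_left (by nlinarith) hcpos

theorem sum_mul_sq_eq_of_forall_le (w g : A → ℝ) {L : ℝ → ℝ} {m : ℝ} (hL : HasDerivAt L m 0)
    (hL0 : L 0 = 0) (hmin : ∀ t, ∑ a, w a * g a ^ 2 ≤ ∑ a, w a * ((1 - t) * g a + L t) ^ 2) :
    ∑ a, w a * g a ^ 2 = (∑ a, w a * g a) * m := by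
  have hderiv : HasDerivAt (fun t => ∑ a, w a * ((1 - t) * g a + L t) ^ 2)
      (∑ a, w a * (2 * g a * (m - g a))) 0 := by
    refine HasDerivAt.fun_sum fun a _ => ?_
    have hinner : HasDerivAt (fun t => (1 - t) * g a + L t) (-g a + m) 0 := by
      simpa using (((hasDerivAt_id' (0 : ℝ)).const_sub 1).mul_const (g a)).fun_add hL
    refine ((hinner.fun_pow 2).const_mul (w a)).congr_deriv ?_
    rw [hL0]
    push_cast
    ring
  have hloc : IsLocalMin (fun t => ∑ a, w a * ((1 - t) * g a + L t) ^ 2) 0 :=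
    Filter.Eventually.of_forall fun t => by simpa [hL0] using hmin t
  have hexpand : ∑ a, w a * (2 * g a * (m - g a)) =
      2 * ((∑ a, w a * g a) * m - ∑ a, w a * g a ^ 2) := by
    rw [sum_mul, ← sum_sub_distrib, mul_sum]
    exact sum_congr rfl fun a _ => by ring
  linarith [hloc.hasDerivAt_eq_zero hderiv]

theorem hasDerivAt_log_sum_mul_exp {p : A → ℝ} (hp1 : ∑ a, p a = 1) (g : A → ℝ) :
    HasDerivAt (fun t => log (∑ a, p a * exp (t * g a))) (∑ a, p a * g a) 0 := by
  have hsum : HasDerivAt (fun t => ∑ a, p a * exp (t * g a)) (∑ a, p a * g a) 0 := by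
    refine HasDerivAt.fun_sum fun a _ => ?_
    simpa using (((hasDerivAt_id' (0 : ℝ)).mul_const (g a)).exp).const_mul (p a)
  simpa [hp1] using hsum.log (by simp [hp1])

noncomputable def expTilt (p g : A → ℝ) (t : ℝ) (a : A) : ℝ :=
  p a * exp (t * g a) / ∑ b, p b * exp (t * g b)

section expTilt

variable [Nonempty A] {p : A → ℝ} (hp : ∀ a, 0 < p a) (g : A → ℝ) (t : ℝ)
include hp

theorem sum_mul_exp_pos : 0 < ∑ a, p a * exp (t * g a) :=
  sum_pos (fun a _ => mul_pos (hp a) (exp_pos _)) univ_nonempty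

theorem expTilt_pos (a : A) : 0 < expTilt p g t a :=
  div_pos (mul_pos (hp a) (exp_pos _)) (sum_mul_exp_pos hp g t)

theorem sum_expTilt : ∑ a, expTilt p g t a = 1 := by
  simp only [expTilt]
  rw [← sum_div, div_self (sum_mul_exp_pos hp g t).ne']

theorem log_expTilt_div {q : A → ℝ} {a : A} (hq : 0 < q a) :
    log (expTilt p g t a / q a) =
      log (p a / q a) + t * g a - log (∑ b, p b * exp (t * g b)) := by
  have hpq := div_pos (hp a) hq
  rw [expTilt, div_right_comm, mul_div_right_comm,
    log_div (mul_pos hpq (exp_pos _)).ne' (sum_mul_exp_pos hp g t).ne',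
    log_mul hpq.ne' (exp_pos _).ne', log_exp]

end expTilt

theorem sum_mul_sq_eq_of_forall_le_sum_mul_sq_log_div {w p q h g : A → ℝ}
    (hp : ∀ a, 0 < p a) (hq : ∀ a, 0 < q a) (hp1 : ∑ a, p a = 1)
    (hg : ∀ a, g a = h a - log (p a / q a))
    (hmin : ∀ ν : A → ℝ, (∀ a, 0 < ν a) → ∑ a, ν a = 1 →
      ∑ a, w a * g a ^ 2 ≤ ∑ a, w a * (h a - log (ν a / q a)) ^ 2) :
    ∑ a, w a * g a ^ 2 = (∑ a, w a * g a) * ∑ a, p a * g a := by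
  have : Nonempty A := univ_nonempty_iff.mp (nonempty_of_sum_ne_zero (f := p) (by simp [hp1]))
  refine sum_mul_sq_eq_of_forall_le w g (hasDerivAt_log_sum_mul_exp hp1 g) (by simp [hp1])
    fun t => ?_
  have hshift (a : A) : h a - log (expTilt p g t a / q a) =
      (1 - t) * g a + log (∑ b, p b * exp (t * g b)) := by
    rw [log_expTilt_div hp g t (hq a)]
    linear_combination -hg a
  simpa only [hshift] using hmin _ (expTilt_pos hp g t) (sum_expTilt hp g t)

end

/-- Remark after Theorem 1: when the exploratory action distribution equals `πref`
itself, the one-step improvement of the DAPO minimizer `πplus` over `πref` is bounded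
below by `β` times the KL divergence `KL(πref ‖ πplus)`. -/
theorem dapo_improvement_ge_kl {A : Type*} [Fintype A] (β : ℝ) (hβ : 0 < β)
    (πref : A → ℝ) (hrefpos : ∀ a, 0 < πref a) (hrefsum : ∑ a, πref a = 1)
    (Adv : A → ℝ) (hmean : ∑ a, πref a * Adv a = 0)
    (πplus : A → ℝ) (hpluspos : ∀ a, 0 < πplus a) (hplussum : ∑ a, πplus a = 1)
    (hmin : ∀ π : A → ℝ, (∀ a, 0 < π a) → ∑ a, π a = 1 →
      (1 / 2) * ∑ a, πref a * (Adv a / β - Real.log (πplus a / πref a)) ^ 2 ≤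
        (1 / 2) * ∑ a, πref a * (Adv a / β - Real.log (π a / πref a)) ^ 2) :
    β * ∑ a, πref a * Real.log (πref a / πplus a) ≤
      ∑ a, πplus a * (Adv a - β * Real.log (πplus a / πref a)) := by
  set g : A → ℝ := fun a => Adv a / β - Real.log (πplus a / πref a) with hg
  have hKL : ∑ a, πref a * g a = ∑ a, πref a * Real.log (πref a / πplus a) := by
    have (a : A) : πref a * g a = πref a * Adv a / β + πref a * Real.log (πref a / πplus a) := by
      simp only [hg]
      rw [← inv_div (πref a), Real.log_inv]
      ring
    simp only [this, sum_add_distrib, ← sum_div, hmean, zero_div, zero_add]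
  have hstat : ∑ a, πref a * g a ^ 2 = (∑ a, πref a * g a) * ∑ a, πplus a * g a :=
    sum_mul_sq_eq_of_forall_le_sum_mul_sq_log_div hpluspos hrefpos hplussum (fun _ => rfl)
      fun π hπ hπ1 => le_of_mul_le_mul_left (hmin π hπ hπ1) one_half_pos
  have hmono := sum_mul_le_sum_mul_of_sum_mul_sq_eq hrefpos hrefsum πplus g
    (hKL ▸ sum_mul_log_div_nonneg hrefpos hpluspos (hplussum.trans hrefsum.symm).le) hstat
  calc β * ∑ a, πref a * Real.log (πref a / πplus a) = β * ∑ a, πref a * g a := by rw [hKL]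
    _ ≤ β * ∑ a, πplus a * g a := by gcongr
    _ = ∑ a, πplus a * (Adv a - β * Real.log (πplus a / πref a)) := by
      rw [mul_sum]
      refine sum_congr rfl fun a _ => ?_
      simp only [hg]
      field_simp
end

section
/- Work with a deterministic finite-horizon MDP: S is a finite type of states, 𝒜 is a finite type of actions, f : S → 𝒜 → S is a deterministic transition function, r : S → 𝒜 → ℝ is a reward function, T ⊆ S is a set of terminal states, and there is a height function h : S → ℕ with h(s) = 0 if and only if s ∈ T and h(f(s,a)) < h(s) for every non-terminal s and every action a. Let β > 0, let π_ref be a policy with π_ref(a|s) > 0 for all s, a, and let π be any policy with π(a|s) > 0 for all s, a. Then for every initial distribution μ on S, V_β^π(μ) − V_β^{π_ref}(μ) = E_μ^π[g], where g(s) = ∑_a π(a|s)·(r(s,a) + V_β^{π_ref}(f(s,a)) − β·log(π(a|s)/π_ref(a|s))) − V_β^{π_ref}(s) for non-terminal s and g(s) = 0 for terminal s. -/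
/-- KL-regularized value (w.r.t. the reference policy `πref`) of a policy in a
deterministic finite-horizon MDP, defined by recursion on the height function `h`. -/
noncomputable def Vbeta {S 𝒜 : Type*} [Fintype 𝒜] (f : S → 𝒜 → S) (r : S → 𝒜 → ℝ)
    (T : Set S) [DecidablePred (· ∈ T)] (h : S → ℕ)
    (hdec : ∀ s ∉ T, ∀ a, h (f s a) < h s)
    (β : ℝ) (πref π : S → 𝒜 → ℝ) (s : S) : ℝ :=
  if s ∈ T then 0
  else ∑ a, π s a *
    (r s a + Vbeta f r T h hdec β πref π (f s a) - β * Real.log (π s a / πref s a))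
termination_by h s
decreasing_by exact hdec s (by assumption) _

/-- Expected cumulative value along trajectories of `π`: `W(s) = 0` for terminal `s`,
`W(s) = g(s) + ∑_a π(a|s)·W(f(s,a))` otherwise. -/
noncomputable def Wcum {S 𝒜 : Type*} [Fintype 𝒜] (f : S → 𝒜 → S)
    (T : Set S) [DecidablePred (· ∈ T)] (h : S → ℕ)
    (hdec : ∀ s ∉ T, ∀ a, h (f s a) < h s)
    (π : S → 𝒜 → ℝ) (g : S → ℝ) (s : S) : ℝ :=
  if s ∈ T then 0
  else g s + ∑ a, π s a * Wcum f T h hdec π g (f s a)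
termination_by h s
decreasing_by exact hdec s (by assumption) _

/-- Performance difference lemma: the gap between the KL-regularized values of `π`
and `πref` equals the expected cumulative one-step policy improvement
`g(s) = 𝒯_β^π V_β^{πref}(s) − V_β^{πref}(s)` along trajectories of `π`. -/
theorem performance_difference_lemma {S 𝒜 : Type*} [Fintype S] [Fintype 𝒜]
    (f : S → 𝒜 → S) (r : S → 𝒜 → ℝ)
    (T : Set S) [DecidablePred (· ∈ T)] (h : S → ℕ)
    (hT : ∀ s, h s = 0 ↔ s ∈ T)
    (hdec : ∀ s ∉ T, ∀ a, h (f s a) < h s)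
    (β : ℝ) (hβ : 0 < β)
    (πref : S → 𝒜 → ℝ)
    (hrefpos : ∀ s a, 0 < πref s a) (hrefsum : ∀ s, ∑ a, πref s a = 1)
    (π : S → 𝒜 → ℝ)
    (hπpos : ∀ s a, 0 < π s a) (hπsum : ∀ s, ∑ a, π s a = 1)
    (μ : S → ℝ) (hμnn : ∀ s, 0 ≤ μ s) (hμsum : ∑ s, μ s = 1) :
    (∑ s, μ s * Vbeta f r T h hdec β πref π s) -
        (∑ s, μ s * Vbeta f r T h hdec β πref πref s) =
      ∑ s, μ s * Wcum f T h hdec π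
        (fun s => if s ∈ T then 0
          else (∑ a, π s a *
              (r s a + Vbeta f r T h hdec β πref πref (f s a)
                - β * Real.log (π s a / πref s a)))
            - Vbeta f r T h hdec β πref πref s) s := by
  have key : ∀ n s, h s ≤ n →
      Vbeta f r T h hdec β πref π s - Vbeta f r T h hdec β πref πref s =
        Wcum f T h hdec π
          (fun s => if s ∈ T then 0
            else (∑ a, π s a *
                (r s a + Vbeta f r T h hdec β πref πref (f s a)
                  - β * Real.log (π s a / πref s a)))
              - Vbeta f r T h hdec β πref πref s) s := by
    intro n
    induction n with
    | zero =>
      intro s hs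
      have hsT : s ∈ T := (hT s).1 (Nat.le_zero.mp hs)
      rw [Vbeta, Vbeta, Wcum]
      simp [hsT]
    | succ n ih =>
      intro s hs
      by_cases hsT : s ∈ T
      · rw [Vbeta, Vbeta, Wcum]; simp [hsT]
      · rw [Vbeta, Wcum]
        simp only [if_neg hsT]
        have hW : ∑ a, π s a * Wcum f T h hdec π
            (fun s => if s ∈ T then 0
              else (∑ a, π s a *
                  (r s a + Vbeta f r T h hdec β πref πref (f s a)
                    - β * Real.log (π s a / πref s a)))
                - Vbeta f r T h hdec β πref πref s) (f s a)
            = ∑ a, π s a * (Vbeta f r T h hdec β πref π (f s a)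
                - Vbeta f r T h hdec β πref πref (f s a)) := by
          refine Finset.sum_congr rfl fun a _ => ?_
          rw [ih (f s a) (Nat.lt_succ_iff.mp (lt_of_lt_of_le (hdec s hsT a) hs))]
        rw [hW]
        have hsplit : ∑ a, π s a *
            (r s a + Vbeta f r T h hdec β πref π (f s a)
              - β * Real.log (π s a / πref s a))
            = (∑ a, π s a *
                (r s a + Vbeta f r T h hdec β πref πref (f s a)
                  - β * Real.log (π s a / πref s a)))
              + ∑ a, π s a * (Vbeta f r T h hdec β πref π (f s a)
                  - Vbeta f r T h hdec β πref πref (f s a)) := by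
          rw [← Finset.sum_add_distrib]
          refine Finset.sum_congr rfl fun a _ => ?_
          ring
        rw [hsplit]
        ring
  rw [← Finset.sum_sub_distrib]
  refine Finset.sum_congr rfl fun s _ => ?_
  rw [← mul_sub, key (h s) s le_rfl]
end

section
/- Work with a deterministic finite-horizon MDP: S is a finite type of states, 𝒜 is a finite type of actions, f : S → 𝒜 → S is a deterministic transition function, r : S → 𝒜 → ℝ is a reward function, T ⊆ S is a set of terminal states, and there is a height function h : S → ℕ with h(s) = 0 if and only if s ∈ T and h(f(s,a)) < h(s) for every non-terminal s and every action a. Let β > 0 and let π_ref be a policy with π_ref(a|s) > 0 for all s, a. Let ν_S : S → ℝ satisfy ν_S(s) > 0 for every non-terminal s, and for each non-terminal s let ν_A(·|s) be a probability mass function on 𝒜 with ν_A(a|s) > 0 for all a. Suppose the policy π⁺, with π⁺(a|s) > 0 for all s, a, minimizes L(π) = (1/2)·∑_{s non-terminal} ν_S(s)·∑_a ν_A(a|s)·(A^{π_ref}(s,a)/β − log(π(a|s)/π_ref(a|s)))² over all policies π with π(a|s) > 0 for all s, a. Then for every initial distribution μ on S, V_β^{π⁺}(μ) ≥ V_β^{π_ref}(μ).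 -/
/-!
At a non-terminal state `s` put `c a = A^{π_ref}(s,a) / β` and
`δ a = c a - log (π⁺(a|s) / π_ref(a|s))`. The DAPO loss decouples over states, so `π⁺(·|s)`
minimises `∑ a, ν_A(a|s) δ(a)²` on the open simplex, and the first-order condition makes
`ν_A(a|s) δ(a) / π⁺(a|s)` a constant `λ`: all `δ a` share the sign of `λ`. Since `π_ref`
centres the advantage, `E_{π_ref}[δ] = KL(π_ref ‖ π⁺) ≥ 0`, which forces `λ ≥ 0` and hence
`E_{π⁺}[δ] ≥ 0`. So the regularised one-step gain of `π⁺` over `V^{π_ref}` is nonnegative at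
every state, and backward induction on the height gives `V^{π_ref} ≤ V_β^{π⁺}`, while
`V_β^{π_ref} = V^{π_ref}`.
-/

/-- Unregularized value of a policy in a deterministic finite-horizon MDP,
defined by recursion on the height function `h`. -/
noncomputable def Vpol {S 𝒜 : Type*} [Fintype 𝒜] (f : S → 𝒜 → S) (r : S → 𝒜 → ℝ)
    (T : Set S) [DecidablePred (· ∈ T)] (h : S → ℕ)
    (hdec : ∀ s ∉ T, ∀ a, h (f s a) < h s)
    (π : S → 𝒜 → ℝ) (s : S) : ℝ :=
  if s ∈ T then 0
  else ∑ a, π s a * (r s a + Vpol f r T h hdec π (f s a))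
termination_by h s
decreasing_by exact hdec s (by assumption) _

open Finset

theorem sum_mul_log_div_le_sum_sub {ι : Type*} (s : Finset ι) (p q : ι → ℝ)
    (hp : ∀ i ∈ s, 0 < p i) (hq : ∀ i ∈ s, 0 < q i) :
    ∑ i ∈ s, q i * Real.log (p i / q i) ≤ ∑ i ∈ s, p i - ∑ i ∈ s, q i := by
  rw [← sum_sub_distrib]
  refine sum_le_sum fun i hi => ?_
  calc q i * Real.log (p i / q i) ≤ q i * (p i / q i - 1) :=
        mul_le_mul_of_nonneg_left
          (Real.log_le_sub_one_of_pos (div_pos (hp i hi) (hq i hi))) (hq i hi).le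
    _ = p i - q i := by field_simp [(hq i hi).ne']

theorem deriv_eq_deriv_of_min_on_sum_level {ι : Type*} [Fintype ι] (g : ι → ℝ → ℝ)
    (g' p : ι → ℝ)
    (hp : ∀ i, 0 < p i) (hg : ∀ i, HasDerivAt (g i) (g' i) (p i))
    (hmin : ∀ p' : ι → ℝ, (∀ i, 0 < p' i) → ∑ i, p' i = ∑ i, p i →
      ∑ i, g i (p i) ≤ ∑ i, g i (p' i))
    (i j : ι) : g' i = g' j := by
  classical
  set v : ι → ℝ := Pi.single i 1 - Pi.single j 1
  have hv : ∑ x, v x = 0 := by simp [v, sum_sub_distrib]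
  have hpos : ∀ᶠ t in nhds (0 : ℝ), ∀ x, 0 < p x + t * v x :=
    Filter.eventually_all.2 fun x =>
      continuousAt_const.eventually_lt (by fun_prop) (by simpa using hp x)
  have hloc : IsLocalMin (fun t => ∑ x, g x (p x + t * v x)) 0 := by
    filter_upwards [hpos] with t ht
    simpa using hmin _ ht (by simp [sum_add_distrib, ← mul_sum, hv])
  have hder : HasDerivAt (fun t => ∑ x, g x (p x + t * v x)) (∑ x, g' x * v x) 0 :=
    HasDerivAt.fun_sum fun x _ => by
      have hline : HasDerivAt (fun t : ℝ => p x + t * v x) (v x) 0 := by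
        simpa using ((hasDerivAt_id (0 : ℝ)).mul_const (v x)).const_add (p x)
      exact (by simpa using hg x : HasDerivAt (g x) (g' x) (p x + 0 * v x)).comp 0 hline
  have := hloc.hasDerivAt_eq_zero hder
  simpa [v, mul_sub, sum_sub_distrib, Pi.single_apply, sub_eq_zero] using this

theorem sum_mul_sub_log_div_nonneg_of_min {𝒜 : Type*} [Fintype 𝒜] (c ν q p : 𝒜 → ℝ)
    (hν : ∀ a, 0 < ν a) (hq : ∀ a, 0 < q a) (hqs : ∑ a, q a = 1)
    (hc : ∑ a, q a * c a = 0) (hp : ∀ a, 0 < p a) (hps : ∑ a, p a = 1)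
    (hmin : ∀ p' : 𝒜 → ℝ, (∀ a, 0 < p' a) → ∑ a, p' a = 1 →
      ∑ a, ν a * (c a - Real.log (p a / q a)) ^ 2 ≤
        ∑ a, ν a * (c a - Real.log (p' a / q a)) ^ 2) :
    0 ≤ ∑ a, p a * (c a - Real.log (p a / q a)) := by
  set δ : 𝒜 → ℝ := fun a => c a - Real.log (p a / q a)
  have hderiv : ∀ a, HasDerivAt (fun y => ν a * (c a - Real.log (y / q a)) ^ 2)
      (-2 * (ν a * δ a / p a)) (p a) := fun a => by
    have hlog := ((hasDerivAt_id' (x := p a)).div_const (q a)).log (div_pos (hp a) (hq a)).ne'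
    refine (((hlog.const_sub (c a)).fun_pow 2).const_mul (ν a)).congr_deriv ?_
    simp only [δ]
    field_simp [(hp a).ne', (hq a).ne']
    ring
  have hstat : ∀ a b, ν a * δ a / p a = ν b * δ b / p b := fun a b => by
    have := deriv_eq_deriv_of_min_on_sum_level _ _ p hp hderiv
      (fun p' hp' hs => hmin p' hp' (hs.trans hps)) a b
    linarith
  obtain ⟨a₀, -⟩ := nonempty_of_sum_ne_zero (hps.trans_ne one_ne_zero)
  set lam := ν a₀ * δ a₀ / p a₀
  have hδ : ∀ a, δ a = lam * (p a / ν a) := fun a => by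
    rw [show lam = ν a * δ a / p a from (hstat a a₀).symm]
    field_simp [(hp a).ne', (hν a).ne']
  have hgibbs := sum_mul_log_div_le_sum_sub univ p q (fun a _ => hp a) (fun a _ => hq a)
  have hKL : 0 ≤ ∑ a, q a * δ a := by
    simp only [δ, mul_sub, sum_sub_distrib, hc]
    linarith
  have hlam : 0 ≤ lam := by
    refine nonneg_of_mul_nonneg_left (b := ∑ a, q a * (p a / ν a)) ?_
      (sum_pos (fun a _ => mul_pos (hq a) (div_pos (hp a) (hν a))) ⟨a₀, mem_univ a₀⟩)
    simpa only [hδ, mul_sum, mul_left_comm] using hKL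
  exact sum_nonneg fun a _ => by
    change 0 ≤ p a * δ a
    rw [hδ]
    exact mul_nonneg (hp a).le (mul_nonneg hlam (div_pos (hp a) (hν a)).le)

theorem le_of_forall_sum_mul_le_sum_mul {ι X : Type*} [DecidableEq ι] (t : Finset ι)
    (w : ι → ℝ) (L : ι → X → ℝ) (P : X → Prop) (x : ι → X)
    (hmin : ∀ y : ι → X, (∀ i, P (y i)) → ∑ i ∈ t, w i * L i (x i) ≤ ∑ i ∈ t, w i * L i (y i))
    (hx : ∀ i, P (x i)) {i : ι} (hi : i ∈ t) (hw : 0 < w i) {z : X} (hz : P z) :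
    L i (x i) ≤ L i z := by
  have hupd := hmin (Function.update x i z)
    ((Function.forall_update_iff _ (p := fun _ => P)).2 ⟨hz, fun j _ => hx j⟩)
  have hrest : ∑ j ∈ t.erase i, w j * L j (Function.update x i z j) =
      ∑ j ∈ t.erase i, w j * L j (x j) :=
    sum_congr rfl fun j hj => by rw [Function.update_of_ne (ne_of_mem_erase hj)]
  rw [← add_sum_erase t _ hi, ← add_sum_erase t _ hi, Function.update_self, hrest] at hupd
  exact le_of_mul_le_mul_left (by linarith) hw

theorem height_induction {S 𝒜 : Type*} (f : S → 𝒜 → S) (T : Set S) (h : S → ℕ)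
    (hdec : ∀ s ∉ T, ∀ a, h (f s a) < h s) {P : S → Prop}
    (step : ∀ s, (s ∉ T → ∀ a, P (f s a)) → P s) (s : S) : P s :=
  (measure h).wf.induction s fun s ih => step s fun hs a => ih _ (hdec s hs a)

section MDP

variable {S 𝒜 : Type*} [Fintype 𝒜] (f : S → 𝒜 → S) (r : S → 𝒜 → ℝ)
  (T : Set S) [DecidablePred (· ∈ T)] (h : S → ℕ) (hdec : ∀ s ∉ T, ∀ a, h (f s a) < h s)

theorem Vpol_of_mem (π : S → 𝒜 → ℝ) {s : S} (hs : s ∈ T) : Vpol f r T h hdec π s = 0 := by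
  rw [Vpol, if_pos hs]

theorem Vpol_of_notMem (π : S → 𝒜 → ℝ) {s : S} (hs : s ∉ T) :
    Vpol f r T h hdec π s = ∑ a, π s a * (r s a + Vpol f r T h hdec π (f s a)) := by
  rw [Vpol, if_neg hs]

theorem Vbeta_of_mem (β : ℝ) (πref π : S → 𝒜 → ℝ) {s : S} (hs : s ∈ T) :
    Vbeta f r T h hdec β πref π s = 0 := by
  rw [Vbeta, if_pos hs]

theorem Vbeta_of_notMem (β : ℝ) (πref π : S → 𝒜 → ℝ) {s : S} (hs : s ∉ T) :
    Vbeta f r T h hdec β πref π s = ∑ a, π s a *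
      (r s a + Vbeta f r T h hdec β πref π (f s a) - β * Real.log (π s a / πref s a)) := by
  rw [Vbeta, if_neg hs]

theorem Vbeta_self_eq_Vpol (β : ℝ) (π : S → 𝒜 → ℝ) (s : S) :
    Vbeta f r T h hdec β π π s = Vpol f r T h hdec π s := by
  induction s using height_induction f T h hdec with
  | step s ih =>
    by_cases hs : s ∈ T
    · rw [Vbeta_of_mem f r T h hdec β π π hs, Vpol_of_mem f r T h hdec π hs]
    · rw [Vbeta_of_notMem f r T h hdec β π π hs, Vpol_of_notMem f r T h hdec π hs]
      simp [ih hs]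

noncomputable def advantage (π : S → 𝒜 → ℝ) (s : S) (a : 𝒜) : ℝ :=
  r s a + Vpol f r T h hdec π (f s a) - Vpol f r T h hdec π s

theorem sum_mul_advantage_eq_zero (π : S → 𝒜 → ℝ) {s : S} (hs : s ∉ T)
    (hπ : ∑ a, π s a = 1) : ∑ a, π s a * advantage f r T h hdec π s a = 0 := by
  simp only [advantage, mul_sub, sum_sub_distrib, ← sum_mul, hπ, one_mul,
    ← Vpol_of_notMem f r T h hdec π hs, sub_self]

theorem sum_mul_advantage_sub_log_nonneg_of_min {β : ℝ} (hβ : 0 < β)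
    (πref π : S → 𝒜 → ℝ) (ν : 𝒜 → ℝ) {s : S} (hs : s ∉ T) (hν : ∀ a, 0 < ν a)
    (hrefpos : ∀ a, 0 < πref s a) (hrefsum : ∑ a, πref s a = 1)
    (hπ : ∀ a, 0 < π s a) (hπsum : ∑ a, π s a = 1)
    (hmin : ∀ p : 𝒜 → ℝ, (∀ a, 0 < p a) → ∑ a, p a = 1 →
      ∑ a, ν a * (advantage f r T h hdec πref s a / β - Real.log (π s a / πref s a)) ^ 2 ≤
        ∑ a, ν a * (advantage f r T h hdec πref s a / β - Real.log (p a / πref s a)) ^ 2) :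
    0 ≤ ∑ a, π s a *
      (advantage f r T h hdec πref s a - β * Real.log (π s a / πref s a)) := by
  have hcentered : ∑ a, πref s a * (advantage f r T h hdec πref s a / β) = 0 := by
    simp only [mul_div_assoc', ← sum_div,
      sum_mul_advantage_eq_zero f r T h hdec πref hs hrefsum, zero_div]
  have hscale : ∑ a, π s a *
        (advantage f r T h hdec πref s a - β * Real.log (π s a / πref s a)) =
      β * ∑ a, π s a *
        (advantage f r T h hdec πref s a / β - Real.log (π s a / πref s a)) := by
    rw [mul_sum]
    exact sum_congr rfl fun a _ => by field_simp
  rw [hscale]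
  exact mul_nonneg hβ.le (sum_mul_sub_log_div_nonneg_of_min _ ν _ _ hν hrefpos hrefsum
    hcentered hπ hπsum hmin)

theorem Vpol_le_Vbeta_of_forall_sum_nonneg (β : ℝ) (πref π : S → 𝒜 → ℝ)
    (hπ : ∀ s a, 0 ≤ π s a) (hπsum : ∀ s, ∑ a, π s a = 1)
    (hgain : ∀ s ∉ T, 0 ≤ ∑ a, π s a *
      (advantage f r T h hdec πref s a - β * Real.log (π s a / πref s a)))
    (s : S) : Vpol f r T h hdec πref s ≤ Vbeta f r T h hdec β πref π s := by
  induction s using height_induction f T h hdec with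
  | step s ih =>
    by_cases hs : s ∈ T
    · rw [Vbeta_of_mem f r T h hdec β πref π hs, Vpol_of_mem f r T h hdec πref hs]
    rw [Vbeta_of_notMem f r T h hdec β πref π hs]
    calc Vpol f r T h hdec πref s
        ≤ ∑ a, π s a * Vpol f r T h hdec πref s + ∑ a, π s a *
            (advantage f r T h hdec πref s a - β * Real.log (π s a / πref s a)) := by
          rw [← sum_mul, hπsum s, one_mul]
          exact le_add_of_nonneg_right (hgain s hs)
      _ = ∑ a, π s a * (r s a + Vpol f r T h hdec πref (f s a)
            - β * Real.log (π s a / πref s a)) := by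
          rw [← sum_add_distrib]
          exact sum_congr rfl fun a _ => by rw [advantage]; ring
      _ ≤ _ := sum_le_sum fun a _ =>
          mul_le_mul_of_nonneg_left (by linarith [ih hs a]) (hπ s a)

end MDP

theorem dapo_monotonic_improvement_general {S 𝒜 : Type*} [Fintype S] [Fintype 𝒜]
    (f : S → 𝒜 → S) (r : S → 𝒜 → ℝ)
    (T : Set S) [DecidablePred (· ∈ T)] (h : S → ℕ)
    (hdec : ∀ s ∉ T, ∀ a, h (f s a) < h s)
    (β : ℝ) (hβ : 0 < β)
    (πref : S → 𝒜 → ℝ)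
    (hrefpos : ∀ s a, 0 < πref s a) (hrefsum : ∀ s, ∑ a, πref s a = 1)
    (νS : S → ℝ) (hνS : ∀ s ∉ T, 0 < νS s)
    (νA : S → 𝒜 → ℝ)
    (hνApos : ∀ s ∉ T, ∀ a, 0 < νA s a)
    (πplus : S → 𝒜 → ℝ)
    (hpluspos : ∀ s a, 0 < πplus s a) (hplussum : ∀ s, ∑ a, πplus s a = 1)
    (hmin : ∀ π : S → 𝒜 → ℝ, (∀ s a, 0 < π s a) → (∀ s, ∑ a, π s a = 1) →
      (1 / 2) * ∑ s ∈ Finset.univ.filter (fun s => s ∉ T), νS s *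
          ∑ a, νA s a *
            ((r s a + Vpol f r T h hdec πref (f s a) - Vpol f r T h hdec πref s) / β
              - Real.log (πplus s a / πref s a)) ^ 2 ≤
        (1 / 2) * ∑ s ∈ Finset.univ.filter (fun s => s ∉ T), νS s *
          ∑ a, νA s a *
            ((r s a + Vpol f r T h hdec πref (f s a) - Vpol f r T h hdec πref s) / β
              - Real.log (π s a / πref s a)) ^ 2) :
    ∀ μ : S → ℝ, (∀ s, 0 ≤ μ s) → ∑ s, μ s = 1 →
      ∑ s, μ s * Vbeta f r T h hdec β πref πref s ≤
        ∑ s, μ s * Vbeta f r T h hdec β πref πplus s := by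
  classical
  set A := advantage f r T h hdec πref
  have hmin' : ∀ π : S → 𝒜 → ℝ, (∀ s, (∀ a, 0 < π s a) ∧ ∑ a, π s a = 1) →
      ∑ s ∈ univ.filter (fun s => s ∉ T), νS s *
          ∑ a, νA s a * (A s a / β - Real.log (πplus s a / πref s a)) ^ 2 ≤
        ∑ s ∈ univ.filter (fun s => s ∉ T), νS s *
          ∑ a, νA s a * (A s a / β - Real.log (π s a / πref s a)) ^ 2 := fun π hπ =>
    le_of_mul_le_mul_left (hmin π (fun s => (hπ s).1) (fun s => (hπ s).2)) one_half_pos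
  have hgain : ∀ s ∉ T, 0 ≤ ∑ a, πplus s a * (A s a - β * Real.log (πplus s a / πref s a)) :=
    fun s hs => sum_mul_advantage_sub_log_nonneg_of_min f r T h hdec hβ πref πplus (νA s) hs
      (hνApos s hs) (hrefpos s) (hrefsum s) (hpluspos s) (hplussum s) fun p hp hps =>
        le_of_forall_sum_mul_le_sum_mul _ νS
          (fun s p => ∑ a, νA s a * (A s a / β - Real.log (p a / πref s a)) ^ 2)
          (fun p => (∀ a, 0 < p a) ∧ ∑ a, p a = 1) πplus hmin'
          (fun s => ⟨hpluspos s, hplussum s⟩) (mem_filter.2 ⟨mem_univ s, hs⟩) (hνS s hs)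
          ⟨hp, hps⟩
  intro μ hμ _
  refine sum_le_sum fun s _ => mul_le_mul_of_nonneg_left ?_ (hμ s)
  rw [Vbeta_self_eq_Vpol]
  exact Vpol_le_Vbeta_of_forall_sum_nonneg f r T h hdec β πref πplus
    (fun s a => (hpluspos s a).le) hplussum hgain s

/-- **Theorem 1 (monotonic improvement).** The solution of the exact DAPO
least-squares objective under exploratory state and action sampling distributions
has KL-regularized value at least that of the reference policy. -/
theorem dapo_monotonic_improvement {S 𝒜 : Type*} [Fintype S] [Fintype 𝒜]
    (f : S → 𝒜 → S) (r : S → 𝒜 → ℝ)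
    (T : Set S) [DecidablePred (· ∈ T)] (h : S → ℕ)
    (hT : ∀ s, h s = 0 ↔ s ∈ T)
    (hdec : ∀ s ∉ T, ∀ a, h (f s a) < h s)
    (β : ℝ) (hβ : 0 < β)
    (πref : S → 𝒜 → ℝ)
    (hrefpos : ∀ s a, 0 < πref s a) (hrefsum : ∀ s, ∑ a, πref s a = 1)
    (νS : S → ℝ) (hνS : ∀ s ∉ T, 0 < νS s)
    (νA : S → 𝒜 → ℝ)
    (hνApos : ∀ s ∉ T, ∀ a, 0 < νA s a) (hνAsum : ∀ s ∉ T, ∑ a, νA s a = 1)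
    (πplus : S → 𝒜 → ℝ)
    (hpluspos : ∀ s a, 0 < πplus s a) (hplussum : ∀ s, ∑ a, πplus s a = 1)
    (hmin : ∀ π : S → 𝒜 → ℝ, (∀ s a, 0 < π s a) → (∀ s, ∑ a, π s a = 1) →
      (1 / 2) * ∑ s ∈ Finset.univ.filter (fun s => s ∉ T), νS s *
          ∑ a, νA s a *
            ((r s a + Vpol f r T h hdec πref (f s a) - Vpol f r T h hdec πref s) / β
              - Real.log (πplus s a / πref s a)) ^ 2 ≤
        (1 / 2) * ∑ s ∈ Finset.univ.filter (fun s => s ∉ T), νS s *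
          ∑ a, νA s a *
            ((r s a + Vpol f r T h hdec πref (f s a) - Vpol f r T h hdec πref s) / β
              - Real.log (π s a / πref s a)) ^ 2) :
    ∀ μ : S → ℝ, (∀ s, 0 ≤ μ s) → ∑ s, μ s = 1 →
      ∑ s, μ s * Vbeta f r T h hdec β πref πref s ≤
        ∑ s, μ s * Vbeta f r T h hdec β πref πplus s :=
  dapo_monotonic_improvement_general f r T h hdec β hβ πref hrefpos hrefsum νS hνS νA hνApos πplus
    hpluspos hplussum hmin
end
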